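/- Let L ≥ 1 and n ≥ 1, and let H be a nonempty finite set of iterated hash functions from binary strings (strings over a two-character alphabet) of length at most n to Fin (2^L), from which h is drawn uniformly at random. If H is universal — i.e., P(h(s)=h(s')) ≤ 1/2^L for all distinct binary strings s, s' of length at most n — then n ≤ 2L + L·2^{L+1}. -/

import Mathlib

/-!
Feeding a constant symbol to an iterated hash with `2^L` states runs the compression map
`v ↦ F v b` from `H₀`; after `2^L` steps the orbit has entered its cycle, whose length `p` is at
most `2^L`. Hence every hash function identifies `0^(2^L)` with `0^(2^L + d)` for some
`d ∈ [2, 2^L]` (take `d = p`, or `d = 2` when `p = 1`). Universality bounds the fraction of the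
family colliding on each of these `2^L - 1` pairs by `1/2^L`, and together they cannot cover the
whole family. So no such family exists once `n ≥ 2^(L+1)`.
-/

open Finset Function

theorem List.foldl_replicate {α β : Type*} (f : β → α → β) (a : α) (n : ℕ) (b : β) :
    foldl f b (replicate n a) = (fun b => f b a)^[n] b := by
  induction n generalizing b with
  | zero => rfl
  | succ n ih => rw [replicate_succ, foldl_cons, ih, iterate_succ_apply]

namespace Function

variable {α : Type*} (f : α → α) (x : α)

theorem iterate_card_mem_periodicPts [Fintype α] : f^[Fintype.card α] x ∈ periodicPts f := by
  obtain ⟨i, j, hne, heq⟩ :=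
    Fintype.exists_ne_map_eq_of_card_lt (fun k : Fin (Fintype.card α + 1) => f^[k] x) (by simp)
  wlog hij : i < j generalizing i j
  · exact this j i hne.symm heq.symm (lt_of_le_of_ne (not_lt.1 hij) hne.symm)
  have hper : IsPeriodicPt f (j - i) (f^[i] x) := by
    rw [IsPeriodicPt, IsFixedPt, ← iterate_add_apply, Nat.sub_add_cancel hij.le]
    exact heq.symm
  have hcard : Fintype.card α - i + i = Fintype.card α := Nat.sub_add_cancel (by omega)
  rw [← hcard, iterate_add_apply]
  exact mk_mem_periodicPts (Nat.sub_pos_of_lt hij) (hper.apply_iterate _)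

theorem exists_isPeriodicPt_iterate_card [Fintype α] (hα : 2 ≤ Fintype.card α) :
    ∃ d ∈ Icc 2 (Fintype.card α), IsPeriodicPt f d (f^[Fintype.card α] x) := by
  set y := f^[Fintype.card α] x
  have hpos : 0 < minimalPeriod f y :=
    minimalPeriod_pos_of_mem_periodicPts (iterate_card_mem_periodicPts f x)
  have hle : minimalPeriod f y ≤ Fintype.card α := minimalPeriod_le_card
  by_cases hone : minimalPeriod f y = 1
  · refine ⟨2, mem_Icc.2 ⟨le_rfl, hα⟩, ?_⟩
    simpa [hone] using (isPeriodicPt_minimalPeriod f y).mul_const 2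
  · exact ⟨_, mem_Icc.2 ⟨by omega, hle⟩, isPeriodicPt_minimalPeriod f y⟩

end Function

theorem List.exists_foldl_replicate_card_add_eq {α V : Type*} [Fintype V]
    (hV : 2 ≤ Fintype.card V) (F : V → α → V) (H₀ : V) (a : α) :
    ∃ d ∈ Icc 2 (Fintype.card V),
      foldl F H₀ (replicate (Fintype.card V + d) a) = foldl F H₀ (replicate (Fintype.card V) a) := by
  obtain ⟨d, hd, hper⟩ := exists_isPeriodicPt_iterate_card (fun v => F v a) H₀ hV
  refine ⟨d, hd, ?_⟩
  rw [foldl_replicate, foldl_replicate, add_comm, iterate_add_apply]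
  exact hper

theorem Finset.le_card_of_forall_exists_mem_of_card_mul_le {ι β : Type*} {H : Finset β}
    {D : Finset ι} {A : ι → Finset β} {q : ℕ} (hH : H.Nonempty)
    (hcover : ∀ h ∈ H, ∃ d ∈ D, h ∈ A d) (hA : ∀ d ∈ D, #(A d) * q ≤ #H) : q ≤ #D := by
  classical
  have hsum : #H ≤ ∑ d ∈ D, #(A d) :=
    (card_le_card fun h hh => mem_biUnion.2 (hcover h hh)).trans card_biUnion_le
  have hmul : (∑ d ∈ D, #(A d)) * q ≤ #D * #H := by
    rw [sum_mul]
    simpa using sum_le_card_nsmul D _ _ hA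
  refine Nat.le_of_mul_le_mul_left ?_ hH.card_pos
  calc #H * q ≤ (∑ d ∈ D, #(A d)) * q := Nat.mul_le_mul_right q hsum
    _ ≤ #D * #H := hmul
    _ = #H * #D := mul_comm _ _

theorem iterated_universal_length_bound_general (L n : ℕ) (hL : 1 ≤ L)
    (H : Finset ({s : List Bool // s.length ≤ n} → Fin (2 ^ L))) (hne : H.Nonempty)
    (hiter : ∀ h ∈ H, ∃ (F : Fin (2 ^ L) → Bool → Fin (2 ^ L)) (H0 : Fin (2 ^ L)),
      ∀ s : {s : List Bool // s.length ≤ n}, h s = List.foldl F H0 s.1)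
    (huniv : ∀ s s' : {s : List Bool // s.length ≤ n}, s ≠ s' →
      ((H.filter fun h => h s = h s').card : ℚ) / H.card ≤ 1 / 2 ^ L) :
    n ≤ 2 * L + L * 2 ^ (L + 1) := by
  by_contra! hlong
  have hlen : 2 ^ L + 2 ^ L ≤ n := by
    have := Nat.le_mul_of_pos_left (2 ^ (L + 1)) hL
    rw [pow_succ] at this hlong
    omega
  have h2L : 2 ≤ 2 ^ L := by simpa using Nat.pow_le_pow_right two_pos hL
  let zeros (k : ℕ) : {s : List Bool // s.length ≤ n} :=
    ⟨List.replicate (min k n) false, by simp⟩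
  let collide (d : ℕ) := H.filter fun h => h (zeros (2 ^ L + d)) = h (zeros (2 ^ L))
  have hcover : ∀ h ∈ H, ∃ d ∈ Icc 2 (2 ^ L), h ∈ collide d := by
    intro h hh
    obtain ⟨F, H0, hF⟩ := hiter h hh
    obtain ⟨d, hd, hcoll⟩ :=
      List.exists_foldl_replicate_card_add_eq (by simpa using h2L) F H0 false
    rw [Fintype.card_fin] at hd hcoll
    have hdn : 2 ^ L + d ≤ n := by have := (mem_Icc.1 hd).2; omega
    refine ⟨d, hd, mem_filter.2 ⟨hh, ?_⟩⟩
    rw [hF, hF]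
    simpa [zeros, hdn, show 2 ^ L ≤ n by omega] using hcoll
  have hsmall : ∀ d ∈ Icc 2 (2 ^ L), #(collide d) * 2 ^ L ≤ #H := by
    intro d hd
    have hdist : zeros (2 ^ L + d) ≠ zeros (2 ^ L) := by
      intro heq
      have hlen := congrArg (fun s => s.1.length) heq
      simp only [zeros, List.length_replicate] at hlen
      have := (mem_Icc.1 hd).1
      omega
    have := huniv _ _ hdist
    rw [div_le_div_iff₀ (by exact_mod_cast hne.card_pos) (by positivity), one_mul] at this
    exact_mod_cast this
  have := le_card_of_forall_exists_mem_of_card_mul_le hne hcover hsmall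
  simp only [Nat.card_Icc] at this
  omega

/-- a nonempty finite family of iterated hash functions from binary strings
of length at most `n` to `Fin (2^L)` (`h` drawn uniformly) that is universal (collision
probability at most `1/2^L`) satisfies `n ≤ 2L + L·2^{L+1}`. -/
theorem iterated_universal_length_bound (L n : ℕ) (hL : 1 ≤ L) (hn : 1 ≤ n)
    (H : Finset ({s : List Bool // s.length ≤ n} → Fin (2 ^ L))) (hne : H.Nonempty)
    (hiter : ∀ h ∈ H, ∃ (F : Fin (2 ^ L) → Bool → Fin (2 ^ L)) (H0 : Fin (2 ^ L)),
      ∀ s : {s : List Bool // s.length ≤ n}, h s = List.foldl F H0 s.1)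
    (huniv : ∀ s s' : {s : List Bool // s.length ≤ n}, s ≠ s' →
      ((H.filter fun h => h s = h s').card : ℚ) / H.card ≤ 1 / 2 ^ L) :
    n ≤ 2 * L + L * 2 ^ (L + 1) :=
  iterated_universal_length_bound_general L n hL H hne hiter huniv
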